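/- arXiv:funct-an/9601002 — 4 statements merged into one kernel-verified Lean document; each statement's English description precedes it below -/
import Mathlib

section
/- For the normalized Dirichlet eigenfunctions χ_n(y) = √(2/a) sin(πny/a) on [0,a], the inner product ∫_0^a y χ_1'(y) χ_n(y) dy equals (−1)^n · 2n/(n²−1) for every integer n ≥ 2. -/
open Real intervalIntegral

/-! Write `2 sin(nπy/a) cos(πy/a) = sin((n+1)πy/a) + sin((n-1)πy/a)` and integrate each term
against `y` by parts: since `sin(kπ) = 0`, only the boundary term `-a² cos(kπ)/(kπ)` survives,
so the integral is `(-1)^n (1/(n+1) + 1/(n-1)) = (-1)^n · 2n/(n²-1)`. -/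

theorem hasDerivAt_sin_div_sq_sub_mul_cos_div {c : ℝ} (hc : c ≠ 0) (x : ℝ) :
    HasDerivAt (fun y => sin (c * y) / c ^ 2 - y * cos (c * y) / c) (x * sin (c * x)) x := by
  have hlin : HasDerivAt (fun y => c * y) c x := by
    simpa using (hasDerivAt_id x).const_mul c
  have hsin := ((hasDerivAt_sin (c * x)).comp x hlin).div_const (c ^ 2)
  have hcos := ((hasDerivAt_id x).mul ((hasDerivAt_cos (c * x)).comp x hlin)).div_const c
  refine (hsin.sub hcos).congr_deriv ?_
  simp only [Function.comp_apply, id]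
  field_simp
  ring

theorem integral_mul_sin_mul {c : ℝ} (hc : c ≠ 0) (a b : ℝ) :
    ∫ y in a..b, y * sin (c * y)
      = sin (c * b) / c ^ 2 - b * cos (c * b) / c - (sin (c * a) / c ^ 2 - a * cos (c * a) / c) :=
  integral_eq_sub_of_hasDerivAt (fun x _ => hasDerivAt_sin_div_sq_sub_mul_cos_div hc x)
    ((by fun_prop : Continuous fun y => y * sin (c * y)).intervalIntegrable _ _)

theorem integral_mul_sin_nat_mul_pi_div {a : ℝ} (ha : a ≠ 0) {k : ℕ} (hk : k ≠ 0) :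
    ∫ y in (0:ℝ)..a, y * sin (k * π * y / a) = (-1) ^ (k + 1) * a ^ 2 / (k * π) := by
  have hc : (k : ℝ) * π / a ≠ 0 := by positivity
  have hka : (k : ℝ) * π / a * a = k * π := by field_simp
  have hrw : ∀ y : ℝ, (k : ℝ) * π * y / a = k * π / a * y := fun y => by ring
  simp only [hrw]
  rw [integral_mul_sin_mul hc, hka, sin_nat_mul_pi, cos_nat_mul_pi]
  simp only [mul_zero, sin_zero, zero_mul, zero_div, sub_zero]
  field_simp
  ring

theorem mul_cos_mul_sin_eq_sin_add_sin {a : ℝ} (ha : 0 ≤ a) (n y : ℝ) :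
    y * (√(2 / a) * (π / a) * cos (π * y / a)) * (√(2 / a) * sin (n * π * y / a))
      = π / a ^ 2 * (y * sin ((n + 1) * π * y / a) + y * sin ((n - 1) * π * y / a)) := by
  have hsq : √(2 / a) * √(2 / a) = 2 / a := mul_self_sqrt (by positivity)
  have h := two_mul_sin_mul_cos (n * π * y / a) (π * y / a)
  rw [show n * π * y / a - π * y / a = (n - 1) * π * y / a by ring,
    show n * π * y / a + π * y / a = (n + 1) * π * y / a by ring] at h
  calc _ = √(2 / a) * √(2 / a) * (π / a) * y * (sin (n * π * y / a) * cos (π * y / a)) := by ring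
    _ = π / a ^ 2 * (y * (2 * sin (n * π * y / a) * cos (π * y / a))) := by rw [hsq]; ring
    _ = _ := by rw [h]; ring

/-- For the normalized Dirichlet modes `χ_n(y) = √(2/a) sin(nπy/a)` on `[0,a]`,
`∫_0^a y χ_1'(y) χ_n(y) dy = (−1)^n · 2n/(n²−1)` for every `n ≥ 2`. -/
theorem inner_y_chi1'_chin (a : ℝ) (ha : 0 < a) (n : ℕ) (hn : 2 ≤ n) :
    ∫ y in (0:ℝ)..a,
        y * (Real.sqrt (2 / a) * (π / a) * Real.cos (π * y / a))
          * (Real.sqrt (2 / a) * Real.sin ((n : ℝ) * π * y / a))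
      = (-1 : ℝ) ^ n * (2 * (n : ℝ) / ((n : ℝ) ^ 2 - 1)) := by
  obtain ⟨m, rfl⟩ := Nat.exists_eq_add_of_le' hn
  have hsplit : ∀ y : ℝ,
      y * (√(2 / a) * (π / a) * cos (π * y / a)) * (√(2 / a) * sin (((m + 2 : ℕ) : ℝ) * π * y / a))
        = π / a ^ 2 * (y * sin (((m + 3 : ℕ) : ℝ) * π * y / a)
            + y * sin (((m + 1 : ℕ) : ℝ) * π * y / a)) := fun y => by
    rw [mul_cos_mul_sin_eq_sin_add_sin ha.le]
    push_cast
    ring_nf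
  have hcont : ∀ k : ℝ,
      IntervalIntegrable (fun y => y * sin (k * π * y / a)) MeasureTheory.volume 0 a :=
    fun k => (by fun_prop : Continuous fun y => y * sin (k * π * y / a)).intervalIntegrable _ _
  rw [integral_congr fun y _ => hsplit y, integral_const_mul, integral_add (hcont _) (hcont _),
    integral_mul_sin_nat_mul_pi_div ha.ne' (by omega),
    integral_mul_sin_nat_mul_pi_div ha.ne' (by omega)]
  have hm : ((m : ℝ) + 2) ^ 2 - 1 ≠ 0 := by
    nlinarith [(m.cast_nonneg : (0 : ℝ) ≤ m)]
  push_cast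
  field_simp
  ring
end

section
/- If g : [−b,b] → ℝ is continuously differentiable and g(−b) = 0, then ∫_{−b}^b g(x)² dx ≤ (2b)² ∫_{−b}^b g'(x)² dx. -/
/-!
Since `g` vanishes at the left endpoint, the fundamental theorem of calculus bounds `|g|`
pointwise by `∫ |g'|`; integrating the square of this bound over an interval of length `L`
and applying Cauchy–Schwarz, `(∫ |g'|)² ≤ L ∫ g'²`, gives `∫ g² ≤ L² ∫ g'²`.
-/

open Real intervalIntegral Set
open MeasureTheory (volume)

section Poincare

variable {a c : ℝ} {f g g' : ℝ → ℝ}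

-- Written as a quadratic in `t` in the shape expected by `discrim_le_zero`.
theorem integral_sq_abs_sub_const (hf : IntervalIntegrable f volume a c)
    (hf2 : IntervalIntegrable (fun x => f x ^ 2) volume a c) (t : ℝ) :
    ∫ x in a..c, (|f x| - t) ^ 2
      = (c - a) * (t * t) + (-2 * ∫ x in a..c, |f x|) * t + ∫ x in a..c, f x ^ 2 := by
  have hexpand : ∀ x, (|f x| - t) ^ 2 = (f x ^ 2 - 2 * t * |f x|) + t ^ 2 := fun x => by
    rw [sub_sq, sq_abs]; ring
  simp_rw [hexpand]
  rw [integral_add (hf2.sub (hf.abs.const_mul _)) intervalIntegrable_const,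
    integral_sub hf2 (hf.abs.const_mul _), integral_const_mul, integral_const, smul_eq_mul]
  ring

theorem sq_integral_abs_le_mul_integral_sq (hf : IntervalIntegrable f volume a c)
    (hf2 : IntervalIntegrable (fun x => f x ^ 2) volume a c) (hac : a ≤ c) :
    (∫ x in a..c, |f x|) ^ 2 ≤ (c - a) * ∫ x in a..c, f x ^ 2 := by
  have hquad : discrim (c - a) (-2 * ∫ x in a..c, |f x|) (∫ x in a..c, f x ^ 2) ≤ 0 :=
    discrim_le_zero fun t => integral_sq_abs_sub_const hf hf2 t ▸
      integral_nonneg hac fun _ _ => sq_nonneg _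
  rw [discrim] at hquad
  linarith

theorem abs_le_integral_abs_deriv_of_eq_zero_left (hcont : ContinuousOn g (Icc a c))
    (hderiv : ∀ x ∈ Ioo a c, HasDerivAt g (g' x) x) (hint : IntervalIntegrable g' volume a c)
    (hga : g a = 0) {x : ℝ} (hx : x ∈ Icc a c) :
    |g x| ≤ ∫ t in a..c, |g' t| := by
  have hsub : uIcc a x ⊆ uIcc a c := by
    rw [uIcc_of_le hx.1, uIcc_of_le (hx.1.trans hx.2)]
    exact Icc_subset_Icc_right hx.2
  have hftc : ∫ t in a..x, g' t = g x :=
    (integral_eq_sub_of_hasDerivAt_of_le hx.1 (hcont.mono (Icc_subset_Icc_right hx.2))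
      (fun t ht => hderiv t (Ioo_subset_Ioo_right hx.2 ht)) (hint.mono_set hsub)).trans
      (by rw [hga, sub_zero])
  calc |g x| = |∫ t in a..x, g' t| := by rw [hftc]
    _ ≤ ∫ t in a..x, |g' t| := abs_integral_le_integral_abs hx.1
    _ ≤ ∫ t in a..c, |g' t| :=
      integral_mono_interval le_rfl hx.1 hx.2 (Filter.Eventually.of_forall fun _ => abs_nonneg _)
        hint.abs

theorem integral_sq_le_sq_length_mul_integral_sq_deriv (hac : a ≤ c)
    (hcont : ContinuousOn g (Icc a c)) (hderiv : ∀ x ∈ Ioo a c, HasDerivAt g (g' x) x)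
    (hint : IntervalIntegrable g' volume a c)
    (hint2 : IntervalIntegrable (fun x => g' x ^ 2) volume a c) (hga : g a = 0) :
    ∫ x in a..c, g x ^ 2 ≤ (c - a) ^ 2 * ∫ x in a..c, g' x ^ 2 := by
  set A := ∫ t in a..c, |g' t|
  have hpointwise : ∀ x ∈ Icc a c, g x ^ 2 ≤ A ^ 2 := fun x hx => by
    rw [← sq_abs (g x)]
    exact pow_le_pow_left₀ (abs_nonneg _)
      (abs_le_integral_abs_deriv_of_eq_zero_left hcont hderiv hint hga hx) 2
  have hg2 : IntervalIntegrable (fun x => g x ^ 2) volume a c :=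
    ((hcont.pow 2).mono (uIcc_of_le hac).subset).intervalIntegrable
  calc ∫ x in a..c, g x ^ 2 ≤ ∫ _ in a..c, A ^ 2 :=
        integral_mono_on hac hg2 intervalIntegrable_const hpointwise
    _ = (c - a) * A ^ 2 := by rw [integral_const, smul_eq_mul]
    _ ≤ (c - a) * ((c - a) * ∫ x in a..c, g' x ^ 2) :=
        mul_le_mul_of_nonneg_left (sq_integral_abs_le_mul_integral_sq hint hint2 hac)
          (sub_nonneg.2 hac)
    _ = (c - a) ^ 2 * ∫ x in a..c, g' x ^ 2 := by ring

end Poincare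

/-- If `g ∈ C¹([−b,b])` with `g(−b) = 0`, then
`∫_{−b}^b g² ≤ (2b)² ∫_{−b}^b (g')²`. -/
theorem poincare_rough (b : ℝ) (hb : 0 < b) (g g' : ℝ → ℝ)
    (hderiv : ∀ x ∈ Icc (-b) b, HasDerivAt g (g' x) x)
    (hg' : ContinuousOn g' (Icc (-b) b))
    (h0 : g (-b) = 0) :
    ∫ x in (-b)..b, (g x) ^ 2 ≤ (2 * b) ^ 2 * ∫ x in (-b)..b, (g' x) ^ 2 := by
  have hbb : -b ≤ b := by linarith
  have hIcc : uIcc (-b) b = Icc (-b) b := uIcc_of_le hbb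
  have hpoincare := integral_sq_le_sq_length_mul_integral_sq_deriv hbb
    (fun x hx => (hderiv x hx).continuousAt.continuousWithinAt)
    (fun x hx => hderiv x (Ioo_subset_Icc_self hx))
    (hIcc ▸ hg').intervalIntegrable (hIcc ▸ hg'.pow 2).intervalIntegrable h0
  rwa [sub_neg_eq_add, ← two_mul] at hpoincare
end

section
/- If g : [−b,b] → ℝ is continuously differentiable and g(−b) = 0, then ∫_{−b}^b g'(x)² dx ≥ (π/(4b))² ∫_{−b}^b g(x)² dx, with equality attained by g(x) = sin(π(x+b)/(4b)). -/
open Real intervalIntegral Set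

/-!
For `c (t - a) < π / 2` the function `ρ x = -c tan (c (x - t))` solves the Riccati equation
`ρ' = -(c² + ρ²)` on `[a, t]` and vanishes at `t`. Completing the square gives
`g'² - c² g² = (g' - ρ g)² + (g² ρ)'`, and the boundary term `g² ρ` vanishes at both ends because
`g a = 0`, so `c² ∫ g² ≤ ∫ g'²`. The sharp constant `c = π / (2 (t - a))`, at which `ρ` blows up
at `a`, is reached by letting `c` increase to it. Equality for the quarter sine wave holds because
`cos²` and `sin²` have the same integral over `[0, π / 2]`.
-/

theorem mul_integral_sq_le_integral_deriv_sq_of_riccati {a b q : ℝ} (hab : a ≤ b)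
    {g g' ρ : ℝ → ℝ} (hg : ∀ x ∈ Icc a b, HasDerivAt g (g' x) x)
    (hg' : ContinuousOn g' (Icc a b)) (hρ : ∀ x ∈ Icc a b, HasDerivAt ρ (-(q + ρ x ^ 2)) x)
    (hbdry : g a ^ 2 * ρ a = g b ^ 2 * ρ b) :
    q * ∫ x in a..b, g x ^ 2 ≤ ∫ x in a..b, g' x ^ 2 := by
  have hgc : ContinuousOn g (Icc a b) := fun x hx => (hg x hx).continuousAt.continuousWithinAt
  have hρc : ContinuousOn ρ (Icc a b) := fun x hx => (hρ x hx).continuousAt.continuousWithinAt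
  have hderiv : ∀ x ∈ uIcc a b, HasDerivAt (fun x => g x ^ 2 * ρ x)
      (g' x ^ 2 - q * g x ^ 2 - (g' x - ρ x * g x) ^ 2) x := by
    rw [uIcc_of_le hab]
    exact fun x hx => (((hg x hx).pow 2).mul (hρ x hx)).congr_deriv
      (by simp only [Pi.pow_apply]; ring)
  have hint : IntervalIntegrable (fun x => g' x ^ 2 - q * g x ^ 2 - (g' x - ρ x * g x) ^ 2)
      MeasureTheory.volume a b := by
    apply ContinuousOn.intervalIntegrable_of_Icc hab
    fun_prop
  have hzero := integral_eq_sub_of_hasDerivAt hderiv hint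
  rw [hbdry, sub_self, integral_sub, integral_sub, integral_const_mul] at hzero
  · have : 0 ≤ ∫ x in a..b, (g' x - ρ x * g x) ^ 2 :=
      integral_nonneg hab fun x _ => sq_nonneg _
    linarith
  all_goals
    apply ContinuousOn.intervalIntegrable_of_Icc hab
    fun_prop

theorem hasDerivAt_neg_mul_tan_mul_sub {c t x : ℝ} (hx : cos (c * (x - t)) ≠ 0) :
    HasDerivAt (fun y => -c * tan (c * (y - t)))
      (-(c ^ 2 + (-c * tan (c * (x - t))) ^ 2)) x := by
  have hlin : HasDerivAt (fun y => c * (y - t)) c x := by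
    simpa using ((hasDerivAt_id x).sub_const t).const_mul c
  refine (((hasDerivAt_tan hx).comp x hlin).const_mul (-c)).congr_deriv ?_
  rw [tan_eq_sin_div_cos]
  field_simp
  rw [cos_sq_add_sin_sq, mul_one]

theorem cos_mul_sub_pos {a t c x : ℝ} (hx : x ∈ Icc a t) (hc : 0 ≤ c)
    (hct : c * (t - a) < π / 2) : 0 < cos (c * (x - t)) := by
  apply cos_pos_of_mem_Ioo
  constructor
  · nlinarith [hx.1]
  · nlinarith [hx.2, pi_pos]

theorem mul_sq_integral_sq_le_integral_deriv_sq {a t c : ℝ} (hat : a ≤ t) (hc : 0 ≤ c)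
    (hct : c * (t - a) < π / 2) {g g' : ℝ → ℝ} (hg : ∀ x ∈ Icc a t, HasDerivAt g (g' x) x)
    (hg' : ContinuousOn g' (Icc a t)) (ha : g a = 0) :
    c ^ 2 * ∫ x in a..t, g x ^ 2 ≤ ∫ x in a..t, g' x ^ 2 :=
  mul_integral_sq_le_integral_deriv_sq_of_riccati hat hg hg'
    (fun x hx => hasDerivAt_neg_mul_tan_mul_sub (cos_mul_sub_pos hx hc hct).ne')
    (by simp [ha])

theorem sharp_mul_integral_sq_le_integral_deriv_sq {a t : ℝ} (hat : a < t) {g g' : ℝ → ℝ}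
    (hg : ∀ x ∈ Icc a t, HasDerivAt g (g' x) x) (hg' : ContinuousOn g' (Icc a t))
    (ha : g a = 0) :
    (π / (2 * (t - a))) ^ 2 * ∫ x in a..t, g x ^ 2 ≤ ∫ x in a..t, g' x ^ 2 := by
  set K := π / (2 * (t - a))
  have hK : 0 < K := by have := sub_pos.2 hat; positivity
  have hlim : Filter.Tendsto (fun c : ℝ => c ^ 2 * ∫ x in a..t, g x ^ 2) (nhdsWithin K (Iio K))
      (nhds (K ^ 2 * ∫ x in a..t, g x ^ 2)) :=
    ((continuous_pow 2).mul continuous_const).continuousAt.continuousWithinAt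
  refine le_of_tendsto hlim ?_
  filter_upwards [Ioo_mem_nhdsLT hK] with c hc
  refine mul_sq_integral_sq_le_integral_deriv_sq hat.le hc.1.le ?_ hg hg' ha
  have := (lt_div_iff₀ (by linarith : 0 < 2 * (t - a))).1 hc.2
  linarith

theorem integral_cos_sq_quarter_wave_eq_integral_sin_sq {a t : ℝ} (hat : a ≠ t) :
    ∫ x in a..t, cos (π * (x - a) / (2 * (t - a))) ^ 2
      = ∫ x in a..t, sin (π * (x - a) / (2 * (t - a))) ^ 2 := by
  set k := π / (2 * (t - a))
  have hk : k ≠ 0 := by have := sub_ne_zero.2 hat.symm; positivity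
  have hθ : ∀ x, π * (x - a) / (2 * (t - a)) = k * x - k * a := fun x => by ring
  have hend : k * t - k * a = π / 2 := by
    simp only [k]; field_simp
  simp only [hθ, integral_comp_mul_sub (fun θ => cos θ ^ 2) hk,
    integral_comp_mul_sub (fun θ => sin θ ^ 2) hk, hend, sub_self, integral_cos_sq,
    integral_sin_sq]
  simp

/-- Sharp Poincaré inequality with one Dirichlet endpoint on `[−b,b]`:
if `g ∈ C¹([−b,b])` with `g(−b) = 0`, then
`∫_{−b}^b (g')² ≥ (π/(4b))² ∫_{−b}^b g²`, and equality is attained by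
`g(x) = sin(π(x+b)/(4b))`. -/
theorem poincare_sharp (b : ℝ) (hb : 0 < b) :
    (∀ (g g' : ℝ → ℝ),
        (∀ x ∈ Icc (-b) b, HasDerivAt g (g' x) x) →
        ContinuousOn g' (Icc (-b) b) → g (-b) = 0 →
        (π / (4 * b)) ^ 2 * ∫ x in (-b)..b, (g x) ^ 2 ≤ ∫ x in (-b)..b, (g' x) ^ 2) ∧
    (∫ x in (-b)..b, (π / (4 * b) * Real.cos (π * (x + b) / (4 * b))) ^ 2)
      = (π / (4 * b)) ^ 2 * ∫ x in (-b)..b, (Real.sin (π * (x + b) / (4 * b))) ^ 2 := by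
  have hlen : 2 * (b - -b) = 4 * b := by ring
  refine ⟨fun g g' hg hg' h0 => ?_, ?_⟩
  · simpa only [hlen] using sharp_mul_integral_sq_le_integral_deriv_sq (by linarith) hg hg' h0
  · have hθ : ∀ x, π * (x + b) / (4 * b) = π * (x - -b) / (2 * (b - -b)) := fun x => by ring
    simp only [mul_pow, integral_const_mul, hθ]
    rw [integral_cos_sq_quarter_wave_eq_integral_sin_sq (by linarith)]
end

section
/- Let d₀ > 0, α ≠ 0, M > 0, λ ≠ 0. Among all functions φ ∈ H¹(−∞, −b) with φ(−b) = α, the functional L(φ) = (∫_{−∞}^{−b} φ'(x)² dx − λ²α² d₀ M) / ∫_{−∞}^{−b} φ(x)² dx attains its minimum value −λ⁴ d₀² M² at φ₀(x) = α e^{κ(x+b)} with κ = λ² d₀ M. -/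
/-!
Integrating `φ φ' = (φ² / 2)'` over `(-∞, a)` gives `∫ φ φ' = φ(a)² / 2`, because `φ²` is integrable
together with its derivative and hence vanishes at `-∞`. Expanding `0 ≤ ∫ (φ' - κ φ)²` then yields
`κ φ(a)² - κ² ∫ φ² ≤ ∫ φ'²`, i.e. the quotient is at least `-κ²`. Equality holds exactly when
`φ' = κ φ`, which is the case for `φ₀`.
-/

open Real MeasureTheory Set Filter

theorem integrable_mul_of_integrable_sq {X : Type*} [MeasurableSpace X] {μ : Measure X}
    {f g : X → ℝ} (hf : AEStronglyMeasurable f μ) (hg : AEStronglyMeasurable g μ)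
    (hf2 : Integrable (fun x => f x ^ 2) μ) (hg2 : Integrable (fun x => g x ^ 2) μ) :
    Integrable (fun x => f x * g x) μ :=
  ((memLp_two_iff_integrable_sq hf).2 hf2).integrable_mul ((memLp_two_iff_integrable_sq hg).2 hg2)

theorem integrableOn_sq_const_mul_exp_Iio {κ : ℝ} (hκ : 0 < κ) (α c a : ℝ) :
    IntegrableOn (fun x => (α * exp (κ * (x + c))) ^ 2) (Iio a) := by
  refine (IntegrableOn.mono_set ((integrableOn_exp_mul_Iic (by positivity : 0 < 2 * κ) a).const_mul
    (α ^ 2 * exp (2 * κ * c))) Iio_subset_Iic_self).congr_fun (fun x _ => ?_) measurableSet_Iio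
  simp only [mul_pow, ← exp_nat_mul, mul_assoc, ← exp_add]
  ring_nf

section HalfLine

variable {φ φ' : ℝ → ℝ} {a : ℝ}

theorem integrableOn_mul_deriv_Iio (hφ : ∀ x, HasDerivAt φ (φ' x) x)
    (hφ2 : IntegrableOn (fun x => φ x ^ 2) (Iio a))
    (hφ'2 : IntegrableOn (fun x => φ' x ^ 2) (Iio a)) :
    IntegrableOn (fun x => φ x * φ' x) (Iio a) := by
  have hφ_cont : Continuous φ := continuous_iff_continuousAt.2 fun x => (hφ x).continuousAt
  have hφ'_meas : Measurable φ' := by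
    simpa only [funext fun x => (hφ x).deriv] using measurable_deriv φ
  exact integrable_mul_of_integrable_sq hφ_cont.aestronglyMeasurable
    hφ'_meas.aestronglyMeasurable hφ2 hφ'2

theorem integral_mul_deriv_Iio (hφ : ∀ x, HasDerivAt φ (φ' x) x)
    (hφ2 : IntegrableOn (fun x => φ x ^ 2) (Iio a))
    (hφ'2 : IntegrableOn (fun x => φ' x ^ 2) (Iio a)) :
    ∫ x in Iio a, φ x * φ' x = φ a ^ 2 / 2 := by
  have hderiv : ∀ x ∈ Iic a, HasDerivAt (fun y => φ y ^ 2 / 2) (φ x * φ' x) x := fun x _ =>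
    (((hφ x).fun_pow 2).div_const 2).congr_deriv (by push_cast; ring)
  have hint : IntegrableOn (fun x => φ x * φ' x) (Iic a) :=
    (integrableOn_Iic_iff_integrableOn_Iio).2 (integrableOn_mul_deriv_Iio hφ hφ2 hφ'2)
  have hlim : Tendsto (fun y => φ y ^ 2 / 2) atBot (nhds 0) :=
    tendsto_zero_of_hasDerivAt_of_integrableOn_Iic hderiv hint
      (((integrableOn_Iic_iff_integrableOn_Iio).2 hφ2).div_const 2)
  rw [← integral_Iic_eq_integral_Iio, integral_Iic_of_hasDerivAt_of_tendsto' hderiv hint hlim,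
    sub_zero]

theorem mul_sq_sub_le_integral_deriv_sq (κ : ℝ) (hφ : ∀ x, HasDerivAt φ (φ' x) x)
    (hφ2 : IntegrableOn (fun x => φ x ^ 2) (Iio a))
    (hφ'2 : IntegrableOn (fun x => φ' x ^ 2) (Iio a)) :
    κ * φ a ^ 2 - κ ^ 2 * ∫ x in Iio a, φ x ^ 2 ≤ ∫ x in Iio a, φ' x ^ 2 := by
  have hmul := (integrableOn_mul_deriv_Iio hφ hφ2 hφ'2).const_mul (2 * κ)
  have hexpand : (fun x => (φ' x - κ * φ x) ^ 2)
      = fun x => (φ' x ^ 2 - 2 * κ * (φ x * φ' x)) + κ ^ 2 * φ x ^ 2 := by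
    funext x; ring
  have hsq : 0 ≤ ∫ x in Iio a, (φ' x - κ * φ x) ^ 2 := integral_nonneg fun x => sq_nonneg _
  have hdiff : IntegrableOn (fun x => φ' x ^ 2 - 2 * κ * (φ x * φ' x)) (Iio a) := hφ'2.sub hmul
  rw [hexpand, integral_add hdiff (hφ2.const_mul _), integral_sub hφ'2 hmul,
    integral_const_mul, integral_const_mul, integral_mul_deriv_Iio hφ hφ2 hφ'2] at hsq
  linarith

theorem neg_sq_le_div_integral_sq (κ : ℝ) (hφ : ∀ x, HasDerivAt φ (φ' x) x)
    (hφ2 : IntegrableOn (fun x => φ x ^ 2) (Iio a))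
    (hφ'2 : IntegrableOn (fun x => φ' x ^ 2) (Iio a)) :
    -κ ^ 2 ≤ ((∫ x in Iio a, φ' x ^ 2) - κ * φ a ^ 2) / ∫ x in Iio a, φ x ^ 2 := by
  have hle := mul_sq_sub_le_integral_deriv_sq κ hφ hφ2 hφ'2
  rcases (integral_nonneg fun x => sq_nonneg (φ x) : 0 ≤ ∫ x in Iio a, φ x ^ 2).eq_or_lt
    with hzero | hpos
  · rw [← hzero, div_zero]
    exact neg_nonpos.2 (sq_nonneg κ)
  · rw [le_div_iff₀ hpos]
    linarith

theorem div_integral_sq_eq_neg_sq_of_hasDerivAt_mul {κ : ℝ}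
    (hφ : ∀ x, HasDerivAt φ (κ * φ x) x) (ha : φ a ≠ 0)
    (hφ2 : IntegrableOn (fun x => φ x ^ 2) (Iio a)) :
    ((∫ x in Iio a, (κ * φ x) ^ 2) - κ * φ a ^ 2) / ∫ x in Iio a, φ x ^ 2 = -κ ^ 2 := by
  have hκφ2 : IntegrableOn (fun x => (κ * φ x) ^ 2) (Iio a) := by
    simp only [mul_pow]
    exact hφ2.const_mul _
  have hpair := integral_mul_deriv_Iio hφ hφ2 hκφ2
  have hmass : κ * ∫ x in Iio a, φ x ^ 2 = φ a ^ 2 / 2 := by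
    rw [← integral_const_mul, ← hpair]
    congr 1 with x
    ring
  have hne : (∫ x in Iio a, φ x ^ 2) ≠ 0 := by
    rintro h
    rw [h, mul_zero] at hmass
    exact ha (by nlinarith)
  simp only [mul_pow, integral_const_mul]
  rw [div_eq_iff hne]
  linear_combination (2 * κ) * hmass

end HalfLine

/-- Among all `H¹` functions `φ` on `(−∞,−b)` with `φ(−b) = α`, the functional
`L(φ) = (∫ (φ')² − λ²α²d₀M)/∫ φ²` attains its minimum value `−λ⁴d₀²M²` at
`φ₀(x) = α e^{κ(x+b)}` with `κ = λ²d₀M`. -/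
theorem tail_minimization (b d₀ M α lam : ℝ) (hd : 0 < d₀) (hM : 0 < M)
    (hα : α ≠ 0) (hlam : lam ≠ 0) :
    (let κ : ℝ := lam ^ 2 * d₀ * M
     let φ₀ : ℝ → ℝ := fun x => α * Real.exp (κ * (x + b))
     ((∫ x in Iio (-b), (deriv φ₀ x) ^ 2) - lam ^ 2 * α ^ 2 * d₀ * M) /
        (∫ x in Iio (-b), (φ₀ x) ^ 2) = -(lam ^ 4 * d₀ ^ 2 * M ^ 2)) ∧
    ∀ (φ φ' : ℝ → ℝ), (∀ x : ℝ, HasDerivAt φ (φ' x) x) → φ (-b) = α →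
      IntegrableOn (fun x => (φ x) ^ 2) (Iio (-b)) →
      IntegrableOn (fun x => (φ' x) ^ 2) (Iio (-b)) →
      -(lam ^ 4 * d₀ ^ 2 * M ^ 2) ≤
        ((∫ x in Iio (-b), (φ' x) ^ 2) - lam ^ 2 * α ^ 2 * d₀ * M) /
          (∫ x in Iio (-b), (φ x) ^ 2) := by
  set κ : ℝ := lam ^ 2 * d₀ * M
  have hκ : 0 < κ := by positivity
  have hconst : lam ^ 2 * α ^ 2 * d₀ * M = κ * α ^ 2 := by ring
  have hbound : lam ^ 4 * d₀ ^ 2 * M ^ 2 = κ ^ 2 := by ring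
  rw [hconst, hbound]
  refine ⟨?_, fun φ φ' hφ hφb hφ2 hφ'2 => hφb ▸ neg_sq_le_div_integral_sq κ hφ hφ2 hφ'2⟩
  dsimp only
  set φ₀ : ℝ → ℝ := fun x => α * exp (κ * (x + b))
  have hφ₀ : ∀ x, HasDerivAt φ₀ (κ * φ₀ x) x := fun x =>
    ((((hasDerivAt_id x).add_const b).const_mul κ).exp.const_mul α).congr_deriv (by simp; ring)
  have hφ₀b : φ₀ (-b) = α := by simp [φ₀]
  simp only [fun x => (hφ₀ x).deriv]
  simpa only [hφ₀b] using div_integral_sq_eq_neg_sq_of_hasDerivAt_mul hφ₀ (hφ₀b ▸ hα)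
    (integrableOn_sq_const_mul_exp_Iio hκ α b (-b))
end
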